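/- (Theorem 3.5) For every n ≥ 0, s_n = ∑_{k=0}^{n} (−1)^{n−k} · s_{n,k} · m_k (an identity of integers), where s_{n,k} = ∑_{j=0}^{n−k} C(k+j,k)·C(j,n−j−k). -/

import Mathlib

/-- Value of a Motzkin step: `0` is up (+1), `1` is horizontal (0), `2` is down (-1). -/
def mval : Fin 3 → ℤ := ![1, 0, -1]

/-- Partial sum of the first `i` steps of the word `w`. -/
def mpsum {n : ℕ} (w : Fin n → Fin 3) (i : ℕ) : ℤ :=
  ∑ j : Fin n, if (j : ℕ) < i then mval (w j) else 0

/-- `m n`: number of symmetric Motzkin paths of length `2n`, encoded by their left half,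
a word in `{+1,0,-1}^n` with all partial sums nonnegative. -/
noncomputable def m (n : ℕ) : ℕ := Set.ncard {w : Fin n → Fin 3 | ∀ i ≤ n, 0 ≤ mpsum w i}

/-- Steps of a Schröder path: up `U`, down `D`, and the 2-horizontal step `H`. -/
inductive SStep | U | D | H
deriving DecidableEq

/-- Width of a Schröder step. -/
def SStep.width : SStep → ℕ
  | .U => 1 | .D => 1 | .H => 2

/-- Height increment of a Schröder step. -/
def SStep.height : SStep → ℤ
  | .U => 1 | .D => -1 | .H => 0

/-- `s n`: number of symmetric Schröder paths of length `2n`, encoded by their left half,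
a sequence of steps of total width `n` with all partial height sums nonnegative. -/
noncomputable def s (n : ℕ) : ℕ :=
  Set.ncard {l : List SStep | (l.map SStep.width).sum = n ∧
    ∀ i : ℕ, 0 ≤ ((l.take i).map SStep.height).sum}

/-- `s_{n,k} = ∑_{j=0}^{n-k} C(k+j,k) * C(j, n-j-k)` for `k ≤ n`, and `0` for `k > n`. -/
def snk (n k : ℕ) : ℕ :=
  if k ≤ n then
    ∑ j ∈ Finset.range (n - k + 1), Nat.choose (k + j) k * Nat.choose j (n - j - k)
  else 0

/-!
Record lattice paths by their final height `h`. Motzkin counts satisfy `M (k+1) = L (M k)` for the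
transfer operator `(L f) h = f (h-1) + f h + f (h+1)` (on `h ≥ 0`), while Schröder counts, split by
their last step, satisfy `S (n+2) = (L - 1) (S (n+1)) + S n` with `S 1 = (L - 1) (S 0)` and
`S 0 = M 0`. Hence `S n = q_n(L) (M 0)` for the polynomials `q_{n+2} = (X - 1) q_{n+1} + q_n`, and
the Pascal-type recurrence `s_{n+2,k+1} = s_{n+1,k+1} + s_{n,k+1} + s_{n+1,k}` identifies
`q_n = ∑ₖ (-1)^(n-k) s_{n,k} X^k`. Summing over all heights gives the identity.
-/

open Finset Polynomial

-- Weighted sum along the `d`-th shallow diagonal of Pascal's triangle (Fibonacci for `c = 1`).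
def shallowDiagSum (c : ℕ → ℕ) (d : ℕ) : ℕ := ∑ j ∈ range (d + 1), c j * j.choose (d - j)

lemma shallowDiagSum_zero (c : ℕ → ℕ) : shallowDiagSum c 0 = c 0 := by
  simp [shallowDiagSum]

lemma shallowDiagSum_one (c : ℕ → ℕ) : shallowDiagSum c 1 = c 1 := by
  simp [shallowDiagSum, sum_range_succ]

lemma shallowDiagSum_add (c c' : ℕ → ℕ) (d : ℕ) :
    shallowDiagSum (c + c') d = shallowDiagSum c d + shallowDiagSum c' d := by
  simp only [shallowDiagSum, Pi.add_apply, add_mul, sum_add_distrib]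

lemma shallowDiagSum_add_two (c : ℕ → ℕ) (d : ℕ) :
    shallowDiagSum c (d + 2) =
      shallowDiagSum (c ∘ Nat.succ) (d + 1) + shallowDiagSum (c ∘ Nat.succ) d := by
  simp only [shallowDiagSum]
  rw [sum_range_succ', sum_range_succ, sum_range_succ _ (d + 1)]
  have pascal : ∀ i ∈ range (d + 1), c (i + 1) * (i + 1).choose (d + 2 - (i + 1)) =
      c (i + 1) * i.choose (d + 1 - i) + c (i + 1) * i.choose (d - i) := by
    intro i hi
    have := mem_range.mp hi
    rw [show d + 2 - (i + 1) = d - i + 1 by omega, show d + 1 - i = d - i + 1 by omega,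
      Nat.choose_succ_succ]
    ring
  rw [sum_congr rfl pascal, sum_add_distrib]
  simp
  ring

lemma snk_of_lt {n k : ℕ} (h : n < k) : snk n k = 0 := by
  simp [snk, Nat.not_le.mpr h]

lemma snk_eq_shallowDiagSum {n k : ℕ} (h : k ≤ n) :
    snk n k = shallowDiagSum (fun j => (k + j).choose k) (n - k) := by
  simp only [snk, if_pos h, shallowDiagSum]
  refine sum_congr rfl fun j _ => ?_
  rw [Nat.sub_right_comm]

lemma shallowDiagSum_choose_succ (k d : ℕ) :
    shallowDiagSum (fun j => (k + 1 + j).choose (k + 1)) (d + 2) =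
      shallowDiagSum (fun j => (k + 1 + j).choose (k + 1)) (d + 1) +
      shallowDiagSum (fun j => (k + 1 + j).choose (k + 1)) d +
      shallowDiagSum (fun j => (k + j).choose k) (d + 2) := by
  have pascal : (fun j => (k + 1 + j).choose (k + 1)) =
      (fun j => (k + j).choose k) + fun j => (k + j).choose (k + 1) := by
    funext j
    simp [show k + 1 + j = k + j + 1 by ring, Nat.choose_succ_succ]
  have shift : (fun j => (k + j).choose (k + 1)) ∘ Nat.succ =
      fun j => (k + 1 + j).choose (k + 1) := by
    funext j
    simp [show k + (j + 1) = k + 1 + j by ring]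
  rw [congrArg (shallowDiagSum · (d + 2)) pascal, shallowDiagSum_add,
    shallowDiagSum_add_two (fun j => (k + j).choose (k + 1)), shift]
  ring

lemma snk_self (n : ℕ) : snk n n = 1 := by
  simp [snk_eq_shallowDiagSum le_rfl, shallowDiagSum_zero]

lemma snk_succ_self (n : ℕ) : snk (n + 1) n = n + 1 := by
  simp [snk_eq_shallowDiagSum (Nat.le_succ n), shallowDiagSum_one]

lemma snk_add_two_zero (n : ℕ) : snk (n + 2) 0 = snk (n + 1) 0 + snk n 0 := by
  simpa [snk_eq_shallowDiagSum, Function.comp_def] using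
    shallowDiagSum_add_two (fun j => (0 + j).choose 0) n

lemma snk_add_two_succ (n k : ℕ) :
    snk (n + 2) (k + 1) = snk (n + 1) (k + 1) + snk n (k + 1) + snk (n + 1) k := by
  rcases lt_trichotomy k n with h | rfl | h
  · obtain ⟨d, rfl⟩ := Nat.exists_eq_add_of_lt h
    rw [snk_eq_shallowDiagSum (by omega), snk_eq_shallowDiagSum (by omega),
      snk_eq_shallowDiagSum (by omega), snk_eq_shallowDiagSum (by omega),
      show k + d + 1 + 2 - (k + 1) = d + 2 by omega, show k + d + 1 + 1 - (k + 1) = d + 1 by omega,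
      show k + d + 1 - (k + 1) = d by omega, show k + d + 1 + 1 - k = d + 2 by omega]
    exact shallowDiagSum_choose_succ k d
  · rw [snk_of_lt (Nat.lt_succ_self k), snk_self, snk_succ_self, snk_succ_self]
    ring
  · rcases Nat.lt_or_ge (n + 1) k with h' | h'
    · simp [snk_of_lt (by omega : n + 2 < k + 1), snk_of_lt (by omega : n + 1 < k + 1),
        snk_of_lt (by omega : n < k + 1), snk_of_lt h']
    · obtain rfl : k = n + 1 := by omega
      simp [snk_of_lt (by omega : n + 1 < n + 2), snk_of_lt (by omega : n < n + 2), snk_self]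

noncomputable def schroederPoly (n : ℕ) : ℤ[X] :=
  ∑ k ∈ range (n + 1), C ((-1) ^ (n - k) * (snk n k : ℤ)) * X ^ k

lemma coeff_schroederPoly (n k : ℕ) :
    (schroederPoly n).coeff k = (-1) ^ (n - k) * (snk n k : ℤ) := by
  simp only [schroederPoly, finsetSum_coeff, coeff_C_mul_X_pow, sum_ite_eq, mem_range]
  split_ifs with h
  · rfl
  · simp [snk_of_lt (by omega : n < k)]

lemma schroederPoly_zero : schroederPoly 0 = 1 := by
  simp [schroederPoly, snk_self]

lemma schroederPoly_one : schroederPoly 1 = X - 1 := by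
  simp [schroederPoly, sum_range_succ, snk_self, show snk 1 0 = 1 from rfl]
  ring

lemma schroederPoly_add_two (n : ℕ) :
    schroederPoly (n + 2) = (X - 1) * schroederPoly (n + 1) + schroederPoly n := by
  ext (_ | k)
  · simp only [coeff_add, sub_mul, coeff_sub, coeff_X_mul_zero, one_mul, coeff_schroederPoly,
      snk_add_two_zero, Nat.sub_zero]
    push_cast
    ring
  · simp only [coeff_add, sub_mul, coeff_sub, coeff_X_mul, one_mul, coeff_schroederPoly,
      snk_add_two_succ]
    push_cast
    rcases lt_trichotomy k n with h | rfl | h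
    · obtain ⟨d, rfl⟩ := Nat.exists_eq_add_of_lt h
      rw [show k + d + 1 + 1 - k = d + 2 by omega, show k + d + 1 - k = d + 1 by omega,
        show k + d + 1 - (k + 1) = d by omega]
      ring
    · simp [snk_of_lt (Nat.lt_succ_self k), snk_self]
      ring
    · simp [snk_of_lt (by omega : n + 1 < k + 1), snk_of_lt (by omega : n < k + 1)]

section Transfer

variable {G : Type*} [AddCommGroup G] (L : Module.End ℤ G)

lemma eq_aeval_schroederPoly (w : ℕ → G) (hw₁ : w 1 = (L - 1) (w 0))
    (hw : ∀ n, w (n + 2) = (L - 1) (w (n + 1)) + w n) (n : ℕ) :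
    w n = aeval L (schroederPoly n) (w 0) := by
  induction n using Nat.twoStepInduction with
  | zero => simp [schroederPoly_zero]
  | one => simp [schroederPoly_one, hw₁]
  | more n ih₀ ih₁ =>
    rw [hw, ih₀, ih₁, schroederPoly_add_two]
    simp

lemma aeval_schroederPoly_apply (n : ℕ) (x : G) :
    aeval L (schroederPoly n) x =
      ∑ k ∈ range (n + 1), ((-1) ^ (n - k) * (snk n k : ℤ)) • (L ^ k) x := by
  simp only [schroederPoly, map_sum, map_mul, aeval_C, aeval_X_pow, LinearMap.sum_apply,
    Module.End.mul_apply, Module.algebraMap_end_apply, mul_smul]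

theorem eq_sum_snk_smul (u w : ℕ → G) (hu : ∀ k, u (k + 1) = L (u k)) (hw₀ : w 0 = u 0)
    (hw₁ : w 1 = (L - 1) (w 0)) (hw : ∀ n, w (n + 2) = (L - 1) (w (n + 1)) + w n) (n : ℕ) :
    w n = ∑ k ∈ range (n + 1), ((-1) ^ (n - k) * (snk n k : ℤ)) • u k := by
  have pow_apply : ∀ k, (L ^ k) (u 0) = u k := by
    intro k
    induction k with
    | zero => rfl
    | succ k ih => rw [pow_succ', Module.End.mul_apply, ih, hu]
  rw [eq_aeval_schroederPoly L w hw₁ hw, aeval_schroederPoly_apply, hw₀]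
  simp only [pow_apply]

end Transfer

theorem Set.ncard_eq_sum_ncard_fiberwise {β γ : Type*} [DecidableEq γ] {s : Set β}
    (hs : s.Finite) {f : β → γ} {t : Finset γ} (H : Set.MapsTo f s t) :
    s.ncard = ∑ b ∈ t, {a ∈ s | f a = b}.ncard := by
  rw [Set.ncard_eq_toFinset_card _ hs, card_eq_sum_card_fiberwise (by simpa using H)]
  refine sum_congr rfl fun b _ => ?_
  rw [← Set.ncard_coe_finset]
  congr
  ext
  simp

theorem List.forall_take_iff_forall_prefix {β : Type*} (P : List β → Prop) (l : List β) :
    (∀ i, P (l.take i)) ↔ ∀ l', l' <+: l → P l' :=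
  ⟨fun h _ hl' => List.prefix_iff_eq_take.1 hl' ▸ h _, fun h i => h _ (l.take_prefix i)⟩

section LatticePaths

variable {α : Type*} (width : α → ℕ) (height : α → ℤ)

def nonnegPaths (n : ℕ) : Set (List α) :=
  {l | (l.map width).sum = n ∧ ∀ i : ℕ, 0 ≤ ((l.take i).map height).sum}

def pathsTo (n : ℕ) (h : ℤ) : Set (List α) :=
  {l ∈ nonnegPaths width height n | (l.map height).sum = h}

noncomputable def numPathsTo (n : ℕ) (h : ℤ) : ℕ := (pathsTo width height n h).ncard

variable {width height}

lemma nonneg_of_mem_pathsTo {l : List α} {n : ℕ} {h : ℤ} (hl : l ∈ pathsTo width height n h) :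
    0 ≤ h := by
  simpa [hl.2] using hl.1.2 l.length

lemma height_le_of_mem_pathsTo (hhw : ∀ a, height a ≤ width a) {l : List α} {n : ℕ} {h : ℤ}
    (hl : l ∈ pathsTo width height n h) : h ≤ n := by
  rw [← hl.2, ← hl.1.1, Nat.cast_list_sum, List.map_map]
  exact List.sum_le_sum fun a _ => hhw a

lemma nonnegPaths_finite [Finite α] (hw : ∀ a, 0 < width a) (n : ℕ) :
    (nonnegPaths width height n).Finite := by
  refine (List.finite_length_le α n).subset fun l hl => ?_
  simpa [← hl.1] using List.length_le_sum_of_one_le (l.map width) (by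
    simp only [List.mem_map]
    rintro _ ⟨a, -, rfl⟩
    exact hw a)

lemma pathsTo_finite [Finite α] (hw : ∀ a, 0 < width a) (n : ℕ) (h : ℤ) :
    (pathsTo width height n h).Finite :=
  (nonnegPaths_finite hw n).subset (Set.sep_subset _ _)

lemma numPathsTo_of_neg {n : ℕ} {h : ℤ} (hh : h < 0) : numPathsTo width height n h = 0 := by
  rw [numPathsTo, Set.eq_empty_of_forall_notMem fun l hl => hh.not_ge (nonneg_of_mem_pathsTo hl),
    Set.ncard_empty]

lemma numPathsTo_zero (hw : ∀ a, 0 < width a) (h : ℤ) :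
    numPathsTo width height 0 h = if h = 0 then 1 else 0 := by
  have : pathsTo width height 0 h = if h = 0 then {[]} else ∅ := by
    ext l
    cases l with
    | nil => split_ifs <;> simp_all [pathsTo, nonnegPaths, eq_comm]
    | cons a l => split_ifs <;> simp [pathsTo, nonnegPaths, (hw a).ne']
  rw [numPathsTo, this]
  split_ifs <;> simp

lemma append_singleton_mem_pathsTo {l : List α} {a : α} {n : ℕ} {h : ℤ} (hh : 0 ≤ h) :
    l ++ [a] ∈ pathsTo width height n h ↔
      width a ≤ n ∧ l ∈ pathsTo width height (n - width a) (h - height a) := by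
  simp only [pathsTo, nonnegPaths, Set.mem_ofPred_eq,
    List.forall_take_iff_forall_prefix (fun l' => 0 ≤ (l'.map height).sum),
    List.prefix_concat_iff, or_imp, forall_and, forall_eq, List.map_append, List.sum_append,
    List.map_cons, List.map_nil, List.sum_cons, List.sum_nil, add_zero]
  constructor
  · rintro ⟨⟨hn, -, hl⟩, hs⟩
    exact ⟨by omega, ⟨by omega, hl⟩, by omega⟩
  · rintro ⟨ha, ⟨hn, hl⟩, hs⟩
    exact ⟨⟨by omega, by omega, hl⟩, by omega⟩

theorem numPathsTo_eq_sum_last_step [Fintype α] (hw : ∀ a, 0 < width a) {n : ℕ} (hn : 0 < n) {h : ℤ}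
    (hh : 0 ≤ h) :
    numPathsTo width height n h =
      ∑ a, if width a ≤ n then numPathsTo width height (n - width a) (h - height a) else 0 := by
  classical
  rw [numPathsTo, Set.ncard_eq_sum_ncard_fiberwise (pathsTo_finite hw n h) (f := List.getLast?)
    (t := univ) (by simp [Set.MapsTo]), Fintype.sum_option]
  have no_nil : {l ∈ pathsTo width height n h | l.getLast? = none} = ∅ := by
    ext l
    simp only [Set.mem_ofPred_eq, List.getLast?_eq_none_iff, Set.mem_empty_iff_false, iff_false]
    rintro ⟨hl, rfl⟩
    simp [pathsTo, nonnegPaths] at hl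
    omega
  rw [no_nil, Set.ncard_empty, zero_add]
  refine sum_congr rfl fun a _ => ?_
  have fiber : {l ∈ pathsTo width height n h | l.getLast? = some a} =
      (· ++ [a]) '' {l | width a ≤ n ∧ l ∈ pathsTo width height (n - width a) (h - height a)} := by
    ext l
    simp only [Set.mem_ofPred_eq, List.getLast?_eq_some_iff, Set.mem_image]
    constructor
    · rintro ⟨hl, l', rfl⟩
      exact ⟨l', (append_singleton_mem_pathsTo hh).1 hl, rfl⟩
    · rintro ⟨l', hl', rfl⟩
      exact ⟨(append_singleton_mem_pathsTo hh).2 hl', l', rfl⟩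
  rw [fiber, Set.ncard_image_of_injective _ (List.append_left_injective _)]
  split_ifs with ha <;> simp [ha, numPathsTo]

theorem ncard_nonnegPaths_eq_sum_numPathsTo [Finite α] (hw : ∀ a, 0 < width a)
    (hhw : ∀ a, height a ≤ width a) {n N : ℕ} (hN : n ≤ N) :
    (nonnegPaths width height n).ncard = ∑ h ∈ Icc 0 (N : ℤ), numPathsTo width height n h :=
  Set.ncard_eq_sum_ncard_fiberwise (nonnegPaths_finite hw n) fun l hl => by
    have hl' : l ∈ pathsTo width height n _ := ⟨hl, rfl⟩
    simpa using ⟨nonneg_of_mem_pathsTo hl', (height_le_of_mem_pathsTo hhw hl').trans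
      (by exact_mod_cast hN)⟩

end LatticePaths

lemma mpsum_eq_sum_take_ofFn {n : ℕ} (w : Fin n → Fin 3) (i : ℕ) :
    mpsum w i = (((List.ofFn w).take i).map mval).sum := by
  rw [List.map_take, List.map_ofFn, List.sum_take_ofFn, mpsum, sum_filter]
  rfl

lemma image_ofFn_eq_nonnegPaths (n : ℕ) :
    List.ofFn '' {w : Fin n → Fin 3 | ∀ i ≤ n, 0 ≤ mpsum w i} =
      nonnegPaths (fun _ => 1) mval n := by
  ext l
  constructor
  · rintro ⟨w, hw, rfl⟩
    refine ⟨by simp [Function.comp_def], fun i => ?_⟩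
    rcases le_or_gt i n with hi | hi
    · exact mpsum_eq_sum_take_ofFn w i ▸ hw i hi
    · rw [List.take_of_length_le (by simp; omega), ← List.take_length (l := List.ofFn w)]
      simpa [mpsum_eq_sum_take_ofFn] using hw n le_rfl
  · rintro ⟨hl, hnn⟩
    obtain rfl : l.length = n := by simpa using hl
    exact ⟨l.get, fun i _ => by simpa [mpsum_eq_sum_take_ofFn] using hnn i, List.ofFn_get l⟩

lemma m_eq_ncard (n : ℕ) : m n = (nonnegPaths (fun _ => 1) mval n).ncard := by
  rw [m, ← image_ofFn_eq_nonnegPaths, Set.ncard_image_of_injective _ List.ofFn_injective]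

instance : Fintype SStep := ⟨{.U, .D, .H}, fun a => by cases a <;> simp⟩

lemma SStep.width_pos (a : SStep) : 0 < a.width := by
  cases a <;> decide

lemma SStep.height_le_width (a : SStep) : a.height ≤ a.width := by
  cases a <;> decide

lemma SStep.sum_univ {M : Type*} [AddCommMonoid M] (f : SStep → M) :
    ∑ a, f a = f .U + f .D + f .H := by
  simp [univ, Fintype.elems, add_assoc]

-- Transfer operator of Motzkin paths on height profiles; it kills the unreachable heights `h < 0`.
def motzkinStep : Module.End ℤ (ℤ → ℤ) where
  toFun f h := if 0 ≤ h then f (h - 1) + f h + f (h + 1) else 0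
  map_add' f g := by
    ext h
    by_cases hh : 0 ≤ h <;> simp [hh]
    ring
  map_smul' c f := by
    ext h
    by_cases hh : 0 ≤ h <;> simp [hh]
    ring

lemma motzkinStep_apply (f : ℤ → ℤ) (h : ℤ) :
    motzkinStep f h = if 0 ≤ h then f (h - 1) + f h + f (h + 1) else 0 :=
  rfl

noncomputable def motzkinHeights (k : ℕ) (h : ℤ) : ℤ := numPathsTo (fun _ : Fin 3 => 1) mval k h

noncomputable def schroederHeights (n : ℕ) (h : ℤ) : ℤ := numPathsTo SStep.width SStep.height n h

lemma motzkinHeights_succ (k : ℕ) : motzkinHeights (k + 1) = motzkinStep (motzkinHeights k) := by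
  ext h
  rw [motzkinStep_apply]
  split_ifs with hh
  · simp [motzkinHeights, numPathsTo_eq_sum_last_step (fun _ => Nat.one_pos) k.succ_pos hh,
      Fin.sum_univ_three, mval]
  · simp [motzkinHeights, numPathsTo_of_neg (not_le.mp hh)]

lemma schroederHeights_zero : schroederHeights 0 = motzkinHeights 0 := by
  ext h
  simp [schroederHeights, motzkinHeights, numPathsTo_zero SStep.width_pos,
    numPathsTo_zero (fun _ : Fin 3 => Nat.one_pos)]

lemma schroederHeights_one : schroederHeights 1 = (motzkinStep - 1) (schroederHeights 0) := by
  ext h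
  rcases lt_or_ge h 0 with hh | hh
  · simp [schroederHeights, motzkinStep_apply, hh.not_ge, numPathsTo_of_neg hh]
  · simp [schroederHeights, motzkinStep_apply, hh,
      numPathsTo_eq_sum_last_step SStep.width_pos one_pos hh, SStep.sum_univ, SStep.width,
      SStep.height]
    ring

lemma schroederHeights_add_two (n : ℕ) : schroederHeights (n + 2) =
    (motzkinStep - 1) (schroederHeights (n + 1)) + schroederHeights n := by
  ext h
  rcases lt_or_ge h 0 with hh | hh
  · simp [schroederHeights, motzkinStep_apply, hh.not_ge, numPathsTo_of_neg hh]
  · simp [schroederHeights, motzkinStep_apply, hh,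
      numPathsTo_eq_sum_last_step SStep.width_pos (n + 1).succ_pos hh, SStep.sum_univ, SStep.width,
      SStep.height]
    ring

lemma s_eq_sum_schroederHeights (n : ℕ) :
    (s n : ℤ) = ∑ h ∈ Icc 0 (n : ℤ), schroederHeights n h := by
  simp only [schroederHeights]
  exact_mod_cast ncard_nonnegPaths_eq_sum_numPathsTo SStep.width_pos SStep.height_le_width le_rfl

lemma m_eq_sum_motzkinHeights {k N : ℕ} (hk : k ≤ N) :
    (m k : ℤ) = ∑ h ∈ Icc 0 (N : ℤ), motzkinHeights k h := by
  simp only [motzkinHeights, m_eq_ncard]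
  exact_mod_cast ncard_nonnegPaths_eq_sum_numPathsTo (fun _ => Nat.one_pos)
    (fun a => by fin_cases a <;> decide) hk

/-- **Theorem 3.5.** `s_n = ∑_{k=0}^n (-1)^{n-k} s_{n,k} m_k`. -/
theorem schroeder_eq_alternating_sum_motzkin (n : ℕ) :
    (s n : ℤ) = ∑ k ∈ Finset.range (n + 1),
      (-1 : ℤ) ^ (n - k) * snk n k * m k := by
  have transfer := eq_sum_snk_smul motzkinStep motzkinHeights schroederHeights
    motzkinHeights_succ schroederHeights_zero schroederHeights_one schroederHeights_add_two n
  rw [s_eq_sum_schroederHeights, transfer]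
  simp only [Finset.sum_apply, Pi.smul_apply, smul_eq_mul]
  rw [sum_comm]
  refine sum_congr rfl fun k hk => ?_
  rw [← mul_sum, m_eq_sum_motzkinHeights (Nat.lt_succ_iff.mp (mem_range.mp hk))]
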